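/- arXiv:2501.11039 — 2 statements merged into one kernel-verified Lean document; each statement's English description precedes it below -/
import Mathlib

section
/- Let S be a finite set with |S| = B̂ and let B ≤ B̂. Let f, g : S → ℝ be injective functions (no ties among loss values). Let T_f and T_g denote the Top-B subsets of S under f and g respectively, and let N_f be the number of cross-pairs (i, j) with i ∈ T_f and j ∈ S \ T_f whose order is flipped, i.e., such that (f(i) − f(j) < 0 ≤ g(i) − g(j)) or (g(i) − g(j) < 0 ≤ f(i) − f(j)). Then |T_f △ T_g| ≤ 2·N_f, where △ denotes symmetric difference. -/
/-!
If the Top-B sets `Tf` and `Tg` have the same size, the two halves `Tf \ Tg` and `Tg \ Tf` of their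
symmetric difference have a common size `k`. For `i ∈ Tf \ Tg` and `j ∈ Tg \ Tf`, `f` ranks `i`
above `j` while `g` ranks `j` above `i`, so all `k²` such pairs are order-flipped cross-pairs of `Tf`.
Hence `|Tf △ Tg| = 2k ≤ 2k² ≤ 2 Nf`.
-/

open Classical

open Finset

theorem Finset.card_symmDiff_of_card_eq {α : Type*} [DecidableEq α] {s t : Finset α}
    (h : #s = #t) : #(symmDiff s t) = 2 * #(s \ t) := by
  rw [symmDiff_def, sup_eq_union, card_union_of_disjoint disjoint_sdiff_sdiff,
    card_sdiff_comm h.symm, two_mul]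

theorem lt_and_lt_of_mem_sdiff_of_forall_lt {α β : Type*} [DecidableEq α] [LinearOrder β]
    {S s t : Finset α} {f g : α → β} (hs : s ⊆ S) (ht : t ⊆ S)
    (hfTop : ∀ i ∈ s, ∀ j ∈ S \ s, f j < f i) (hgTop : ∀ i ∈ t, ∀ j ∈ S \ t, g j < g i)
    {i j : α} (hi : i ∈ s \ t) (hj : j ∈ t \ s) : f j < f i ∧ g i < g j := by
  rw [mem_sdiff] at hi hj
  exact ⟨hfTop i hi.1 j (mem_sdiff.2 ⟨ht hj.1, hj.2⟩),
    hgTop j hj.1 i (mem_sdiff.2 ⟨hs hi.1, hi.2⟩)⟩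

theorem misranked_subset_quantity_general
    {α : Type*} [DecidableEq α] (S : Finset α) (B : ℕ)
    (f g : α → ℝ)
    (Tf Tg : Finset α) (hTfS : Tf ⊆ S) (hTgS : Tg ⊆ S)
    (hTfcard : Tf.card = B) (hTgcard : Tg.card = B)
    (hTfTop : ∀ i ∈ Tf, ∀ j ∈ S \ Tf, f j < f i)
    (hTgTop : ∀ i ∈ Tg, ∀ j ∈ S \ Tg, g j < g i)
    (Nf : ℕ)
    (hNf : Nf = ((Tf ×ˢ (S \ Tf)).filter (fun p =>
        (f p.1 - f p.2 < 0 ∧ 0 ≤ g p.1 - g p.2) ∨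
        (g p.1 - g p.2 < 0 ∧ 0 ≤ f p.1 - f p.2))).card) :
    (symmDiff Tf Tg).card ≤ 2 * Nf := by
  have hcard : #Tf = #Tg := hTfcard.trans hTgcard.symm
  have hflipped : #(Tf \ Tg) * #(Tf \ Tg) ≤ Nf := by
    nth_rw 2 [card_sdiff_comm hcard]
    rw [← card_product, hNf]
    refine card_le_card fun p hp => ?_
    obtain ⟨hi, hj⟩ := mem_product.1 hp
    obtain ⟨hf, hg⟩ := lt_and_lt_of_mem_sdiff_of_forall_lt hTfS hTgS hTfTop hTgTop hi hj
    refine mem_filter.2 ⟨mem_product.2 ⟨(mem_sdiff.1 hi).1, ?_⟩, Or.inr ⟨by linarith, by linarith⟩⟩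
    exact mem_sdiff.2 ⟨hTgS (mem_sdiff.1 hj).1, (mem_sdiff.1 hj).2⟩
  calc #(symmDiff Tf Tg) = 2 * #(Tf \ Tg) := card_symmDiff_of_card_eq hcard
    _ ≤ 2 * Nf := Nat.mul_le_mul_left 2 ((Nat.le_mul_self _).trans hflipped)

/-- **Lemma 1 (Misranked Subset Quantity).** The number of tasks changing Top-B membership
between two injective loss functions is at most twice the number of order-flipped cross-pairs. -/
theorem misranked_subset_quantity
    {α : Type*} [DecidableEq α] (S : Finset α) (Bhat B : ℕ)
    (hS : S.card = Bhat) (hB : B ≤ Bhat)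
    (f g : α → ℝ) (hf : Set.InjOn f ↑S) (hg : Set.InjOn g ↑S)
    (Tf Tg : Finset α) (hTfS : Tf ⊆ S) (hTgS : Tg ⊆ S)
    (hTfcard : Tf.card = B) (hTgcard : Tg.card = B)
    (hTfTop : ∀ i ∈ Tf, ∀ j ∈ S \ Tf, f j < f i)
    (hTgTop : ∀ i ∈ Tg, ∀ j ∈ S \ Tg, g j < g i)
    (Nf : ℕ)
    (hNf : Nf = ((Tf ×ˢ (S \ Tf)).filter (fun p =>
        (f p.1 - f p.2 < 0 ∧ 0 ≤ g p.1 - g p.2) ∨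
        (g p.1 - g p.2 < 0 ∧ 0 ≤ f p.1 - f p.2))).card) :
    (symmDiff Tf Tg).card ≤ 2 * Nf :=
  misranked_subset_quantity_general S B f g Tf Tg hTfS hTgS hTfcard hTgcard hTfTop hTgTop Nf hNf
end

section
/- Let S be a finite index set of candidate tasks with |S| = B̂ and B ≤ B̂, and let P be the set of cross-pairs (of cardinality B·(B̂ − B)). Suppose for each cross-pair (i, j) ∈ P there are real random variables X_{ij} (the margin at θ_t) and Y_{ij} (the margin at θ_{t+1}) on a probability space (Ω, μ) such that |Y_{ij} − X_{ij}| ≤ 2G·d almost surely for constants G, d > 0, and μ(|X_{ij}| ≤ ε) ≤ ρ·ε for all ε > 0 with ρ > 0. If m is a random variable satisfying m ≤ 2·#{(i,j) ∈ P : X_{ij} < 0 ≤ Y_{ij} or Y_{ij} < 0 ≤ X_{ij}} pointwise, then E[m] ≤ 4ρGd·B·(B̂ − B). -/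
/-!
A cross-pair can change sign only if its margin at `θ_t` lies within the displacement bound
`2Gd` of zero, so by anti-concentration each flip has probability at most `2ρGd`. Since `m` is
at most twice the number of flips, integrating and summing over the `B(B̂ - B)` cross-pairs
gives the bound.
-/

open MeasureTheory Classical

def signFlip {Ω : Type*} (X Y : Ω → ℝ) : Set Ω :=
  {ω | (X ω < 0 ∧ 0 ≤ Y ω) ∨ (Y ω < 0 ∧ 0 ≤ X ω)}

theorem abs_le_of_signFlip {x y δ : ℝ} (hflip : (x < 0 ∧ 0 ≤ y) ∨ (y < 0 ∧ 0 ≤ x))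
    (hxy : |y - x| ≤ δ) : |x| ≤ δ := by
  rw [abs_le] at hxy ⊢
  rcases hflip with ⟨hx, hy⟩ | ⟨hy, hx⟩ <;> constructor <;> linarith

theorem measureReal_signFlip_le {Ω : Type*} [MeasurableSpace Ω] {μ : Measure Ω}
    [IsFiniteMeasure μ] {X Y : Ω → ℝ} {δ ρ : ℝ} (hδ : 0 < δ) (hρ : 0 ≤ ρ)
    (hae : ∀ᵐ ω ∂μ, |Y ω - X ω| ≤ δ)
    (hanti : ∀ ε : ℝ, 0 < ε → μ {ω | |X ω| ≤ ε} ≤ ENNReal.ofReal (ρ * ε)) :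
    μ.real (signFlip X Y) ≤ ρ * δ := by
  have hsub : signFlip X Y ≤ᵐ[μ] {ω | |X ω| ≤ δ} := by
    filter_upwards [hae] with ω hω hflip using abs_le_of_signFlip hflip hω
  exact ENNReal.toReal_le_of_le_ofReal (by positivity)
    ((measure_mono_ae hsub).trans (hanti δ hδ))

theorem natCast_card_filter_mem_eq_sum_indicator {ι Ω : Type*} (P : Finset ι) (A : ι → Set Ω)
    (ω : Ω) : ((P.filter fun p => ω ∈ A p).card : ℝ) = ∑ p ∈ P, (A p).indicator 1 ω := by
  simp only [Finset.natCast_card_filter, Set.indicator_apply, Pi.one_apply]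

theorem integrable_card_filter_mem {ι Ω : Type*} [MeasurableSpace Ω] {μ : Measure Ω}
    [IsFiniteMeasure μ] (P : Finset ι) {A : ι → Set Ω} (hA : ∀ p, MeasurableSet (A p)) :
    Integrable (fun ω => ((P.filter fun p => ω ∈ A p).card : ℝ)) μ := by
  simp_rw [natCast_card_filter_mem_eq_sum_indicator]
  exact integrable_finsetSum _ fun p _ => (integrable_const 1).indicator (hA p)

theorem integral_card_filter_mem {ι Ω : Type*} [MeasurableSpace Ω] {μ : Measure Ω}
    [IsFiniteMeasure μ] (P : Finset ι) {A : ι → Set Ω} (hA : ∀ p, MeasurableSet (A p)) :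
    ∫ ω, ((P.filter fun p => ω ∈ A p).card : ℝ) ∂μ = ∑ p ∈ P, μ.real (A p) := by
  simp_rw [natCast_card_filter_mem_eq_sum_indicator]
  rw [integral_finsetSum _ fun p _ => (integrable_const 1).indicator (hA p)]
  simp only [integral_indicator_one (hA _)]

/-- The `A p` need not be measurable: the count is compared with that of their measurable hulls. -/
theorem integral_le_mul_sum_measureReal_of_le_card_filter {ι Ω : Type*} [MeasurableSpace Ω]
    {μ : Measure Ω} [IsFiniteMeasure μ] (P : Finset ι) (A : ι → Set Ω) {m : Ω → ℝ} {k : ℝ}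
    (hk : 0 ≤ k) (hm : ∀ ω, m ω ≤ k * ((P.filter fun p => ω ∈ A p).card : ℝ)) :
    ∫ ω, m ω ∂μ ≤ k * ∑ p ∈ P, μ.real (A p) := by
  by_cases hint : Integrable m μ
  swap
  · rw [integral_undef hint]
    exact mul_nonneg hk (Finset.sum_nonneg fun p _ => measureReal_nonneg)
  set T := fun p => toMeasurable μ (A p)
  have hT : ∀ p, MeasurableSet (T p) := fun p => measurableSet_toMeasurable μ (A p)
  have hcount_mono : ∀ ω, ((P.filter fun p => ω ∈ A p).card : ℝ)
      ≤ (P.filter fun p => ω ∈ T p).card := fun ω => by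
    gcongr with p
    exact subset_toMeasurable μ (A p)
  calc ∫ ω, m ω ∂μ ≤ ∫ ω, k * ((P.filter fun p => ω ∈ T p).card : ℝ) ∂μ :=
        integral_mono hint ((integrable_card_filter_mem P hT).const_mul k) fun ω =>
          (hm ω).trans (mul_le_mul_of_nonneg_left (hcount_mono ω) hk)
    _ = k * ∑ p ∈ P, μ.real (A p) := by
        rw [integral_const_mul, integral_card_filter_mem P hT]
        simp only [T, measureReal_def, measure_toMeasurable]

theorem misranking_rate_bound_general
    {α Ω : Type*} [MeasurableSpace Ω] (μ : Measure Ω) [IsProbabilityMeasure μ]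
    (Bhat B : ℕ) (hB : B ≤ Bhat)
    (P : Finset (α × α)) (hP : P.card = B * (Bhat - B))
    (X Y : α × α → Ω → ℝ) {G d ρ : ℝ} (hG : 0 < G) (hd : 0 < d) (hρ : 0 < ρ)
    (hae : ∀ p ∈ P, ∀ᵐ ω ∂μ, |Y p ω - X p ω| ≤ 2 * G * d)
    (hanti : ∀ p ∈ P, ∀ ε : ℝ, 0 < ε → μ {ω | |X p ω| ≤ ε} ≤ ENNReal.ofReal (ρ * ε))
    (m : Ω → ℝ)
    (hm : ∀ ω, m ω ≤ 2 * ((P.filter (fun p =>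
        (X p ω < 0 ∧ 0 ≤ Y p ω) ∨ (Y p ω < 0 ∧ 0 ≤ X p ω))).card : ℝ)) :
    ∫ ω, m ω ∂μ ≤ 4 * ρ * G * d * B * (Bhat - B) := by
  have hflip : ∀ p ∈ P, μ.real (signFlip (X p) (Y p)) ≤ ρ * (2 * G * d) := fun p hp =>
    measureReal_signFlip_le (by positivity) hρ.le (hae p hp) (hanti p hp)
  calc ∫ ω, m ω ∂μ ≤ 2 * ∑ p ∈ P, μ.real (signFlip (X p) (Y p)) :=
        integral_le_mul_sum_measureReal_of_le_card_filter P _ zero_le_two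
          fun ω => (hm ω).trans_eq (by congr)
    _ ≤ 2 * ∑ p ∈ P, ρ * (2 * G * d) := by gcongr with p hp; exact hflip p hp
    _ = 4 * ρ * G * d * B * (Bhat - B) := by
        rw [Finset.sum_const, hP, nsmul_eq_mul, Nat.cast_mul, Nat.cast_sub hB]; ring

/-- Misranking-rate bound (Eq. (31)): combining the per-pair flip-probability bound `ρ·(2Gd)`
with the Lemma 1 bound `m ≤ 2·(number of flipped cross-pairs)` and linearity of expectation. -/
theorem misranking_rate_bound
    {α Ω : Type*} [MeasurableSpace Ω] (μ : Measure Ω) [IsProbabilityMeasure μ]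
    (S : Finset α) (Bhat B : ℕ) (hS : S.card = Bhat) (hB : B ≤ Bhat)
    (P : Finset (α × α)) (hP : P.card = B * (Bhat - B))
    (X Y : α × α → Ω → ℝ) {G d ρ : ℝ} (hG : 0 < G) (hd : 0 < d) (hρ : 0 < ρ)
    (hae : ∀ p ∈ P, ∀ᵐ ω ∂μ, |Y p ω - X p ω| ≤ 2 * G * d)
    (hanti : ∀ p ∈ P, ∀ ε : ℝ, 0 < ε → μ {ω | |X p ω| ≤ ε} ≤ ENNReal.ofReal (ρ * ε))
    (m : Ω → ℝ)
    (hm : ∀ ω, m ω ≤ 2 * ((P.filter (fun p =>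
        (X p ω < 0 ∧ 0 ≤ Y p ω) ∨ (Y p ω < 0 ∧ 0 ≤ X p ω))).card : ℝ)) :
    ∫ ω, m ω ∂μ ≤ 4 * ρ * G * d * B * (Bhat - B) :=
  misranking_rate_bound_general μ Bhat B hB P hP X Y hG hd hρ hae hanti m hm
end
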